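/- arXiv:1505.06849 — 6 statements merged into one kernel-verified Lean document; each statement's English description precedes it below -/
import Mathlib

section
/- For a pairwise comparison matrix A of size n×n (n ≥ 3), the Perron eigenvalue λ_max of A satisfies λ_max ≥ n, with equality if and only if A is consistent (i.e., a_{ik}·a_{kj} = a_{ij} for all i,j,k). -/
/-- A pairwise comparison matrix: positive entries with the reciprocal property. -/
def IsPCM {n : ℕ} (A : Matrix (Fin n) (Fin n) ℝ) : Prop :=
  (∀ i j, 0 < A i j) ∧ (∀ i j, A j i = 1 / A i j)

/-- A PCM is consistent if `a i k * a k j = a i j` for all `i j k`. -/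
def IsConsistent {n : ℕ} (A : Matrix (Fin n) (Fin n) ℝ) : Prop :=
  ∀ i j k, A i k * A k j = A i j

/-- `lam` together with a positive eigenvector `w` forms the Perron eigenpair of `A`
(for a positive matrix, the eigenvalue admitting a positive eigenvector is exactly
the Perron (maximal) eigenvalue). -/
def IsPerronEigenpair {n : ℕ} (A : Matrix (Fin n) (Fin n) ℝ) (lam : ℝ)
    (w : Fin n → ℝ) : Prop :=
  (∀ i, 0 < w i) ∧ A.mulVec w = lam • w

/-- The simple perturbed PCM `A_δ`: the consistent PCM generated by positive weights
`x` (with `x 0 = 1`), whose entry in position (1,2) (0-based: (0,1)) is multiplied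
by `δ` and its reciprocal by `1/δ`. -/
noncomputable def simplePerturbed {n : ℕ} (x : Fin n → ℝ) (δ : ℝ) : Matrix (Fin n) (Fin n) ℝ :=
  fun i j =>
    if i.val = 0 ∧ j.val = 1 then x j * δ
    else if i.val = 1 ∧ j.val = 0 then 1 / (x i * δ)
    else x j / x i

/-- A positive weight vector `w` is efficient for `A` if no positive vector `w'`
approximates every entry at least as well, and some entry strictly better. -/
def IsEfficient {n : ℕ} (A : Matrix (Fin n) (Fin n) ℝ) (w : Fin n → ℝ) : Prop :=
  ¬ ∃ w' : Fin n → ℝ, (∀ i, 0 < w' i) ∧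
      (∀ i j, |A i j - w' i / w' j| ≤ |A i j - w i / w j|) ∧
      (∃ k l, |A k l - w' k / w' l| < |A k l - w k / w l|)


/-!
Conjugating `A` by `D = diag w`, where `w` is the positive eigenvector, gives a matrix
`S = D⁻¹ A D` with positive reciprocal entries (`s i j * s j i = 1`) and all row sums equal
to `λ`. Summing `s i j + s j i ≥ 2` over all pairs gives `2 n λ ≥ 2 n²`, with equality exactly
when every `s i j = 1`, i.e. when `a i j = w i / w j`, which makes `A` consistent. Conversely, if `A`
is consistent then so is `S`, and comparing the row sums `λ = ∑ k, s i j * s j k = s i j * λ`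
forces `s i j = 1`.
-/

open Finset

lemma two_le_add_of_mul_eq_one {a b : ℝ} (ha : 0 < a) (hab : a * b = 1) : 2 ≤ a + b := by
  nlinarith [sq_nonneg (a - 1)]

lemma eq_one_of_mul_eq_one_of_add_eq_two {a b : ℝ} (hab : a * b = 1) (h : a + b = 2) :
    a = 1 := by
  nlinarith [sq_nonneg (a - 1)]

section ReciprocalRowSums

variable {ι : Type*} [Fintype ι] {S : Matrix ι ι ℝ} {lam : ℝ}

lemma sum_add_transpose_eq_of_rowSum (hrow : ∀ i, ∑ j, S i j = lam) :
    ∑ p : ι × ι, (S p.1 p.2 + S p.2 p.1) = 2 * (Fintype.card ι * lam) := by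
  rw [Fintype.sum_prod_type]
  simp only [sum_add_distrib]
  rw [sum_comm (f := fun i j => S j i)]
  simp only [hrow, sum_const, card_univ, nsmul_eq_mul]
  ring

lemma card_le_of_rowSum [Nonempty ι] (hpos : ∀ i j, 0 < S i j)
    (hrec : ∀ i j, S i j * S j i = 1) (hrow : ∀ i, ∑ j, S i j = lam) :
    (Fintype.card ι : ℝ) ≤ lam := by
  have hsum : ∑ _p : ι × ι, (2 : ℝ) ≤ ∑ p : ι × ι, (S p.1 p.2 + S p.2 p.1) :=
    sum_le_sum fun p _ => two_le_add_of_mul_eq_one (hpos _ _) (hrec _ _)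
  rw [sum_add_transpose_eq_of_rowSum hrow] at hsum
  simp only [sum_const, card_univ, Fintype.card_prod, nsmul_eq_mul, Nat.cast_mul] at hsum
  have hcard : (0 : ℝ) < Fintype.card ι := by exact_mod_cast Fintype.card_pos
  nlinarith

lemma card_eq_iff_forall_eq_one [Nonempty ι] (hpos : ∀ i j, 0 < S i j)
    (hrec : ∀ i j, S i j * S j i = 1) (hrow : ∀ i, ∑ j, S i j = lam) :
    lam = Fintype.card ι ↔ ∀ i j, S i j = 1 := by
  constructor
  · intro hlam i j
    have hpair_ge : ∀ p ∈ (univ : Finset (ι × ι)), (2 : ℝ) ≤ S p.1 p.2 + S p.2 p.1 :=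
      fun p _ => two_le_add_of_mul_eq_one (hpos _ _) (hrec _ _)
    have hsum : ∑ _p : ι × ι, (2 : ℝ) = ∑ p : ι × ι, (S p.1 p.2 + S p.2 p.1) := by
      rw [sum_add_transpose_eq_of_rowSum hrow, hlam]
      simp only [sum_const, card_univ, Fintype.card_prod, nsmul_eq_mul, Nat.cast_mul]
      ring
    have hpair := (sum_eq_sum_iff_of_le hpair_ge).1 hsum (i, j) (mem_univ _)
    exact eq_one_of_mul_eq_one_of_add_eq_two (hrec i j) hpair.symm
  · intro hone
    obtain ⟨i⟩ := ‹Nonempty ι›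
    simp [← hrow i, hone]

end ReciprocalRowSums

/-- `D⁻¹ A D` for `D = diag w`. -/
noncomputable def weightScaled {ι : Type*} (A : Matrix ι ι ℝ) (w : ι → ℝ) : Matrix ι ι ℝ :=
  fun i j => A i j * w j / w i

section WeightScaled

variable {ι : Type*} {A : Matrix ι ι ℝ} {w : ι → ℝ}

lemma weightScaled_pos (hA : ∀ i j, 0 < A i j) (hw : ∀ i, 0 < w i) (i j : ι) :
    0 < weightScaled A w i j :=
  div_pos (mul_pos (hA i j) (hw j)) (hw i)

lemma weightScaled_mul_weightScaled_swap (hA : ∀ i j, A i j ≠ 0)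
    (hrec : ∀ i j, A j i = 1 / A i j) (hw : ∀ i, w i ≠ 0) (i j : ι) :
    weightScaled A w i j * weightScaled A w j i = 1 := by
  simp only [weightScaled, hrec i j]
  field_simp [hA i j, hw i, hw j]

lemma weightScaled_rowSum [Fintype ι] {lam : ℝ} (hAw : A.mulVec w = lam • w)
    (hw : ∀ i, w i ≠ 0) (i : ι) : ∑ j, weightScaled A w i j = lam := by
  have hi : ∑ j, A i j * w j = lam * w i := by
    simpa [Matrix.mulVec, dotProduct] using congrFun hAw i
  simp only [weightScaled]
  rw [← sum_div, hi, mul_div_cancel_right₀ _ (hw i)]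

end WeightScaled

section Consistency

variable {n : ℕ} {A : Matrix (Fin n) (Fin n) ℝ}

lemma IsConsistent.weightScaled {w : Fin n → ℝ} (hA : IsConsistent A) (hw : ∀ i, w i ≠ 0) :
    IsConsistent (weightScaled A w) := by
  intro i j k
  simp only [_root_.weightScaled, ← hA i j k]
  field_simp [hw k]

lemma IsConsistent.eq_one_of_rowSum {lam : ℝ} (hA : IsConsistent A)
    (hrow : ∀ i, ∑ j, A i j = lam) (hlam : lam ≠ 0) (i j : Fin n) : A i j = 1 := by
  have h : lam = A i j * lam :=
    calc lam = ∑ k, A i k := (hrow i).symm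
      _ = ∑ k, A i j * A j k := sum_congr rfl fun k _ => (hA i k j).symm
      _ = A i j * lam := by rw [← mul_sum, hrow j]
  exact (mul_eq_right₀ hlam).1 h.symm

lemma isConsistent_of_weightScaled_eq_one {w : Fin n → ℝ} (hw : ∀ i, w i ≠ 0)
    (hone : ∀ i j, weightScaled A w i j = 1) : IsConsistent A := by
  have hA : ∀ i j, A i j = w i / w j := fun i j => by
    have h := hone i j
    rw [weightScaled, div_eq_one_iff_eq (hw i)] at h
    rw [eq_div_iff (hw j), h]
  intro i j k
  rw [hA i k, hA k j, hA i j]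
  field_simp [hw k]

end Consistency

/-- For a PCM of size n ≥ 3, the Perron eigenvalue satisfies
λ_max ≥ n, with equality iff A is consistent. -/
theorem perron_eigenvalue_ge_n_iff_consistent {n : ℕ} (hn : 3 ≤ n)
    (A : Matrix (Fin n) (Fin n) ℝ) (hA : IsPCM A)
    (lam : ℝ) (w : Fin n → ℝ) (hPerron : IsPerronEigenpair A lam w) :
    (n : ℝ) ≤ lam ∧ (lam = n ↔ IsConsistent A) := by
  obtain ⟨hApos, hArec⟩ := hA
  obtain ⟨hwpos, hAw⟩ := hPerron
  have hw : ∀ i, w i ≠ 0 := fun i => (hwpos i).ne'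
  have hnpos : 0 < n := by omega
  have : Nonempty (Fin n) := ⟨⟨0, hnpos⟩⟩
  have hSpos := weightScaled_pos hApos hwpos
  have hSrec := weightScaled_mul_weightScaled_swap (fun i j => (hApos i j).ne') hArec hw
  have hrow := weightScaled_rowSum hAw hw
  have hle : (n : ℝ) ≤ lam := by simpa using card_le_of_rowSum hSpos hSrec hrow
  have hiff := card_eq_iff_forall_eq_one hSpos hSrec hrow
  rw [Fintype.card_fin] at hiff
  refine ⟨hle, fun hlam => isConsistent_of_weightScaled_eq_one hw (hiff.1 hlam), fun hc => ?_⟩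
  have hlam : lam ≠ 0 := (lt_of_lt_of_le (Nat.cast_pos.2 hnpos) hle).ne'
  exact hiff.2 ((hc.weightScaled hw).eq_one_of_rowSum hrow hlam)
end

section
/- Let A_δ be the n×n simple perturbed PCM (n ≥ 3) with first row (1, x_1·δ, x_2, …, x_{n-1}) and all other entries consistent with the positive weights (1, x_1, …, x_{n-1}), except a_{21} = 1/(x_1·δ). Then λ := λ_max(A_δ) satisfies λ³ − n·λ² − (n−2)·(δ + 1/δ − 2) = 0. -/
open Matrix

noncomputable def perturbedOnes (n : ℕ) (δ : ℝ) : Matrix (Fin n) (Fin n) ℝ :=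
  fun i j => if i.val = 0 ∧ j.val = 1 then δ else if i.val = 1 ∧ j.val = 0 then 1 / δ else 1

theorem simplePerturbed_eq_diagonal_conj {n : ℕ} (x : Fin n → ℝ) (δ : ℝ)
    (hx0 : ∀ i : Fin n, i.val = 0 → x i = 1) :
    simplePerturbed x δ = diagonal x⁻¹ * perturbedOnes n δ * diagonal x := by
  ext i j
  simp only [simplePerturbed, perturbedOnes, mul_diagonal, diagonal_mul, Pi.inv_apply]
  split_ifs with h01 h10
  · rw [hx0 i h01.1]; ring
  · rw [hx0 j h10.2]; field_simp
  · field_simp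

theorem Matrix.mulVec_mul_eq_smul_of_diagonal_conj {ι K : Type*} [Fintype ι] [DecidableEq ι]
    [Field K] {B : Matrix ι ι K} {x w : ι → K} {lam : K} (hx : ∀ i, x i ≠ 0)
    (h : (diagonal x⁻¹ * B * diagonal x) *ᵥ w = lam • w) :
    B *ᵥ (x * w) = lam • (x * w) := by
  have hcancel : diagonal x * (diagonal x⁻¹ * B * diagonal x) = B * diagonal x := by
    rw [← Matrix.mul_assoc, ← Matrix.mul_assoc, diagonal_mul_diagonal]
    simp [hx]
  have hdiag : ∀ v, diagonal x *ᵥ v = x * v := fun v => funext (mulVec_diagonal x v)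
  calc B *ᵥ (x * w) = (B * diagonal x) *ᵥ w := by rw [← mulVec_mulVec, hdiag]
    _ = diagonal x *ᵥ (lam • w) := by rw [← hcancel, ← mulVec_mulVec, h]
    _ = lam • (x * w) := by rw [hdiag, mul_smul_comm]

theorem perturbedOnes_mulVec_apply {m : ℕ} (δ : ℝ) (u : Fin (m + 2) → ℝ) (i : Fin (m + 2)) :
    (perturbedOnes (m + 2) δ *ᵥ u) i = ∑ j, u j + (if i = 0 then (δ - 1) * u 1 else 0)
      + (if i = 1 then (1 / δ - 1) * u 0 else 0) := by
  have hval_one : ∀ k : Fin (m + 2), k.val = 1 ↔ k = 1 := fun k => by rw [Fin.ext_iff, Fin.val_one]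
  have hentry : ∀ j, perturbedOnes (m + 2) δ i j * u j = u j
      + (if i = 0 ∧ j = 1 then (δ - 1) * u 1 else 0)
      + (if i = 1 ∧ j = 0 then (1 / δ - 1) * u 0 else 0) := by
    intro j
    simp only [perturbedOnes, Fin.val_eq_zero_iff, hval_one]
    split_ifs with h01 h10 h10
    · exact absurd (h01.1.symm.trans h10.1) zero_ne_one
    · rw [h01.2]; ring
    · rw [h10.2]; ring
    · ring
  simp only [mulVec, dotProduct, hentry, Finset.sum_add_distrib, ite_and]
  simp

theorem perturbedOnes_eigenvalue_cubic {m : ℕ} {δ lam : ℝ} {u : Fin (m + 2) → ℝ} (hδ : δ ≠ 0)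
    (hu : perturbedOnes (m + 2) δ *ᵥ u = lam • u) (hS : ∑ i, u i ≠ 0) :
    lam ^ 3 - (m + 2) * lam ^ 2 - m * (δ + 1 / δ - 2) = 0 := by
  set S := ∑ i, u i
  have hrow : ∀ i, lam * u i = S + (if i = 0 then (δ - 1) * u 1 else 0)
      + (if i = 1 then (1 / δ - 1) * u 0 else 0) := fun i => by
    rw [← perturbedOnes_mulVec_apply, hu, Pi.smul_apply, smul_eq_mul]
  have hrow0 : lam * u 0 = S + (δ - 1) * u 1 := by simpa using hrow 0
  have hrow1 : lam * u 1 = S + (1 / δ - 1) * u 0 := by simpa using hrow 1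
  have hsum : lam * S = (m + 2) * S + (δ - 1) * u 1 + (1 / δ - 1) * u 0 := by
    rw [Finset.mul_sum, Finset.sum_congr rfl fun i _ => hrow i]
    simp [Finset.sum_add_distrib]
  have hinv : δ * (1 / δ) = 1 := mul_one_div_cancel hδ
  set ε := δ - 1
  set η := 1 / δ - 1
  refine (mul_eq_zero.mp ?_).resolve_left hS
  -- Cramer on `hrow0`, `hrow1` (determinant `λ² - εη`) substituted into `hsum`;
  -- `εη = -(ε + η)` is where `δ * (1 / δ) = 1` enters.
  linear_combination (lam ^ 2 - ε * η) * hsum + ε * (lam * hrow1 + η * hrow0)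
    + η * (lam * hrow0 + ε * hrow1) - S * (m - lam) * hinv

/-- The Perron eigenvalue of the simple perturbed PCM satisfies
λ³ − nλ² − (n−2)(δ + 1/δ − 2) = 0. -/
theorem perron_eigenvalue_cubic {n : ℕ} (hn : 3 ≤ n)
    (x : Fin n → ℝ) (hx : ∀ i, 0 < x i) (hx0 : ∀ i : Fin n, i.val = 0 → x i = 1)
    (δ : ℝ) (hδ : 0 < δ)
    (lam : ℝ) (w : Fin n → ℝ)
    (hPerron : IsPerronEigenpair (simplePerturbed x δ) lam w) :
    lam ^ 3 - n * lam ^ 2 - ((n : ℝ) - 2) * (δ + 1 / δ - 2) = 0 := by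
  obtain ⟨m, rfl⟩ : ∃ m, n = m + 2 := ⟨n - 2, by omega⟩
  obtain ⟨hw, hEig⟩ := hPerron
  rw [simplePerturbed_eq_diagonal_conj x δ hx0] at hEig
  have hu := mulVec_mul_eq_smul_of_diagonal_conj (fun i => (hx i).ne') hEig
  have hS : ∑ i, (x * w) i ≠ 0 :=
    (Finset.sum_pos (fun i _ => mul_pos (hx i) (hw i)) Finset.univ_nonempty).ne'
  have hcubic := perturbedOnes_eigenvalue_cubic hδ.ne' hu hS
  push_cast
  linear_combination hcubic
end

section
/- Let A_δ be the n×n simple perturbed PCM and λ its Perron eigenvalue. Then the vector w' with w'_1 = λ·(λ−n+1), w'_2 = (1/x_1)·[λ − (1 − 1/δ)·(λ−n+2)], and w'_i = (1/x_{i-1})·(λ−1+1/δ) for i = 3,…,n, is also an eigenvector of A_δ for λ; moreover w' = c·w where w is the eigenvector with w_1 = λ−1+δ, w_2 = (1/x_1)(λ−1+1/δ), w_i = (1/x_{i-1})·λ(λ−2)/(n−2), and c = λ(λ−n+1)/(λ−1+δ). -/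
theorem Fin.eq_zero_or_eq_one_or_eq_succ_succ {m : ℕ} (i : Fin (m + 2)) :
    i = 0 ∨ i = 1 ∨ ∃ k : Fin m, i = k.succ.succ := by
  obtain rfl | ⟨j, rfl⟩ := i.eq_zero_or_eq_succ
  · exact .inl rfl
  obtain rfl | ⟨k, rfl⟩ := j.eq_zero_or_eq_succ
  · exact .inr (.inl rfl)
  · exact .inr (.inr ⟨k, rfl⟩)

theorem simplePerturbed_self {n : ℕ} (x : Fin n → ℝ) (δ : ℝ) (i : Fin n) :
    simplePerturbed x δ i i = x i / x i := by
  rw [simplePerturbed, if_neg (by omega), if_neg (by omega)]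

section SimplePerturbed

variable {m : ℕ} (x : Fin (m + 2) → ℝ) (δ : ℝ)

theorem simplePerturbed_zero_one : simplePerturbed x δ 0 1 = x 1 * δ := by
  simp [simplePerturbed]

theorem simplePerturbed_one_zero : simplePerturbed x δ 1 0 = 1 / (x 1 * δ) := by
  simp [simplePerturbed]

theorem simplePerturbed_succ_succ_left (k : Fin m) (j : Fin (m + 2)) :
    simplePerturbed x δ k.succ.succ j = x j / x k.succ.succ := by
  simp [simplePerturbed]

theorem simplePerturbed_succ_succ_right (i : Fin (m + 2)) (k : Fin m) :
    simplePerturbed x δ i k.succ.succ = x k.succ.succ / x i := by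
  simp [simplePerturbed]

theorem simplePerturbed_mulVec_apply (hx : ∀ i, x i ≠ 0) {v : Fin (m + 2) → ℝ} {c : ℝ}
    (hv : ∀ k : Fin m, v k.succ.succ = c / x k.succ.succ) (i : Fin (m + 2)) :
    (simplePerturbed x δ).mulVec v i =
      simplePerturbed x δ i 0 * v 0 + simplePerturbed x δ i 1 * v 1 + m * (c / x i) := by
  have htail (k : Fin m) : simplePerturbed x δ i k.succ.succ * v k.succ.succ = c / x i := by
    rw [simplePerturbed_succ_succ_right, hv]
    field_simp [hx]
  rw [Matrix.mulVec, dotProduct, Fin.sum_univ_succ, Fin.sum_univ_succ]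
  simp only [htail, Finset.sum_const, Finset.card_univ, Fintype.card_fin, nsmul_eq_mul,
    Fin.succ_zero_eq_one, add_assoc]

theorem simplePerturbed_mulVec_eq_smul (hx : ∀ i, x i ≠ 0) (hx0 : x 0 = 1) (hδ : δ ≠ 0)
    {lam : ℝ} (hlam : lam ^ 2 * (lam - (m + 2)) * δ = m * (δ - 1) ^ 2) {v : Fin (m + 2) → ℝ}
    (hv0 : v 0 = lam * (lam - (m + 2) + 1))
    (hv1 : v 1 = 1 / x 1 * (lam - (1 - 1 / δ) * (lam - (m + 2) + 2)))
    (hv : ∀ k : Fin m, v k.succ.succ = 1 / x k.succ.succ * (lam - 1 + 1 / δ)) :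
    (simplePerturbed x δ).mulVec v = lam • v := by
  ext i
  rw [simplePerturbed_mulVec_apply x δ hx fun k => (hv k).trans (one_div_mul_eq_div _ _),
    Pi.smul_apply, smul_eq_mul]
  rcases Fin.eq_zero_or_eq_one_or_eq_succ_succ i with rfl | rfl | ⟨k, rfl⟩
  · rw [simplePerturbed_self, simplePerturbed_zero_one, hx0, hv0, hv1]
    field_simp [hx]
    linear_combination -hlam
  · rw [simplePerturbed_one_zero, simplePerturbed_self, hv0, hv1]
    field_simp [hx]
    ring
  · rw [simplePerturbed_succ_succ_left, simplePerturbed_succ_succ_left, hx0, hv0, hv1, hv]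
    field_simp [hx]
    ring

theorem alternative_eq_smul_eigenvector (hδ : δ ≠ 0) {lam : ℝ} (hden : lam - 1 + δ ≠ 0)
    (hm : m ≠ 0) (hlam : lam ^ 2 * (lam - (m + 2)) * δ = m * (δ - 1) ^ 2)
    {w w' : Fin (m + 2) → ℝ}
    (hw0 : w 0 = lam - 1 + δ) (hw1 : w 1 = 1 / x 1 * (lam - 1 + 1 / δ))
    (hw : ∀ k : Fin m, w k.succ.succ = 1 / x k.succ.succ * lam * (lam - 2) / m)
    (hw'0 : w' 0 = lam * (lam - (m + 2) + 1))
    (hw'1 : w' 1 = 1 / x 1 * (lam - (1 - 1 / δ) * (lam - (m + 2) + 2)))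
    (hw' : ∀ k : Fin m, w' k.succ.succ = 1 / x k.succ.succ * (lam - 1 + 1 / δ)) :
    w' = (lam * (lam - (m + 2) + 1) / (lam - 1 + δ)) • w := by
  ext i
  rw [Pi.smul_apply, smul_eq_mul]
  rcases Fin.eq_zero_or_eq_one_or_eq_succ_succ i with rfl | rfl | ⟨k, rfl⟩
  · rw [hw0, hw'0, div_mul_cancel₀ _ hden]
  · have key : lam - (1 - 1 / δ) * (lam - (m + 2) + 2) =
        lam * (lam - (m + 2) + 1) / (lam - 1 + δ) * (lam - 1 + 1 / δ) := by
      field_simp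
      linear_combination -hlam
    rw [hw1, hw'1]
    linear_combination 1 / x 1 * key
  · have key : lam - 1 + 1 / δ =
        lam * (lam - (m + 2) + 1) / (lam - 1 + δ) * (lam * (lam - 2) / m) := by
      field_simp
      linear_combination (1 - lam) * hlam
    rw [hw, hw']
    linear_combination 1 / x k.succ.succ * key

end SimplePerturbed

theorem alternative_perron_eigenvector_general {n : ℕ} (hn : 3 ≤ n)
    (x : Fin n → ℝ) (hx : ∀ i, 0 < x i) (hx0 : ∀ i : Fin n, i.val = 0 → x i = 1)
    (δ : ℝ) (hδ : 0 < δ)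
    (lam : ℝ)
    (hgt : (n : ℝ) < lam)
    (hcubic : lam ^ 3 - n * lam ^ 2 - ((n : ℝ) - 2) * (δ + 1 / δ - 2) = 0)
    (w w' : Fin n → ℝ)
    (hw : ∀ i : Fin n, w i =
      if i.val = 0 then lam - 1 + δ
      else if i.val = 1 then (1 / x i) * (lam - 1 + 1 / δ)
      else (1 / x i) * lam * (lam - 2) / ((n : ℝ) - 2))
    (hw' : ∀ i : Fin n, w' i =
      if i.val = 0 then lam * (lam - n + 1)
      else if i.val = 1 then (1 / x i) * (lam - (1 - 1 / δ) * (lam - n + 2))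
      else (1 / x i) * (lam - 1 + 1 / δ)) :
    (simplePerturbed x δ).mulVec w' = lam • w' ∧
    w' = fun i => (lam * (lam - n + 1) / (lam - 1 + δ)) * w i := by
  obtain ⟨m, rfl⟩ : ∃ m, n = m + 2 := ⟨n - 2, by omega⟩
  rw [Fin.forall_fin_succ, Fin.forall_fin_succ] at hw hw'
  simp only [Fin.coe_ofNat_eq_mod, Nat.zero_mod, ↓reduceIte, Fin.succ_zero_eq_one, Nat.one_mod,
    one_ne_zero, Fin.val_succ, Nat.add_eq_zero_iff, and_false, and_self, Nat.add_eq_right,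
    Nat.cast_add, Nat.cast_ofNat, add_sub_cancel_right] at hw hw'
  obtain ⟨hw0, hw1, hw⟩ := hw
  obtain ⟨hw'0, hw'1, hw'⟩ := hw'
  push_cast at hgt hcubic ⊢
  have hchar : lam ^ 2 * (lam - (m + 2)) * δ = m * (δ - 1) ^ 2 := by
    field_simp at hcubic
    linear_combination hcubic
  have hden : 0 < lam - 1 + δ := by linarith [m.cast_nonneg (α := ℝ)]
  exact ⟨simplePerturbed_mulVec_eq_smul x δ (fun i => (hx i).ne') (hx0 0 rfl) hδ.ne' hchar
      hw'0 hw'1 hw',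
    alternative_eq_smul_eigenvector x δ hδ.ne' hden.ne' (by omega) hchar hw0 hw1 hw hw'0 hw'1 hw'⟩

/-- The alternative explicit vector w'₁ = λ(λ−n+1),
w'₂ = (1/x₁)[λ − (1−1/δ)(λ−n+2)], w'ᵢ = (1/x_{i-1})(λ−1+1/δ) (i ≥ 3) is also an
eigenvector of A_δ for λ, and w' = c·w with c = λ(λ−n+1)/(λ−1+δ). -/
theorem alternative_perron_eigenvector {n : ℕ} (hn : 3 ≤ n)
    (x : Fin n → ℝ) (hx : ∀ i, 0 < x i) (hx0 : ∀ i : Fin n, i.val = 0 → x i = 1)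
    (δ : ℝ) (hδ : 0 < δ) (hδ1 : δ ≠ 1)
    (lam : ℝ) (hlam : ∃ v, IsPerronEigenpair (simplePerturbed x δ) lam v)
    (hgt : (n : ℝ) < lam)
    (hcubic : lam ^ 3 - n * lam ^ 2 - ((n : ℝ) - 2) * (δ + 1 / δ - 2) = 0)
    (w w' : Fin n → ℝ)
    (hw : ∀ i : Fin n, w i =
      if i.val = 0 then lam - 1 + δ
      else if i.val = 1 then (1 / x i) * (lam - 1 + 1 / δ)
      else (1 / x i) * lam * (lam - 2) / ((n : ℝ) - 2))
    (hw' : ∀ i : Fin n, w' i =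
      if i.val = 0 then lam * (lam - n + 1)
      else if i.val = 1 then (1 / x i) * (lam - (1 - 1 / δ) * (lam - n + 2))
      else (1 / x i) * (lam - 1 + 1 / δ)) :
    (simplePerturbed x δ).mulVec w' = lam • w' ∧
    w' = fun i => (lam * (lam - n + 1) / (lam - 1 + δ)) * w i :=
  alternative_perron_eigenvector_general hn x hx hx0 δ hδ lam hgt hcubic w w' hw hw'
end

section
/- For the simple perturbed PCM A_δ with Perron eigenvector w given by w_1 = λ−1+δ, w_2 = (1/x_1)(λ−1+1/δ), it holds that: if δ > 1 then w_1/w_2 < a_{12} = x_1·δ, and if δ < 1 then w_1/w_2 > a_{12}. -/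
section PerturbedRatio

variable {t δ : ℝ}

theorem mul_add_inv_sub_add (t : ℝ) (hδ : δ ≠ 0) :
    δ * (t + δ⁻¹) - (t + δ) = (δ - 1) * (t - 1) := by
  field_simp
  ring

theorem add_div_add_inv_lt_self (ht : 1 < t) (hδ : 1 < δ) : (t + δ) / (t + δ⁻¹) < δ := by
  have hδ₀ : 0 < δ := by linarith
  rw [div_lt_iff₀ (by linarith [inv_pos.2 hδ₀])]
  linarith [mul_add_inv_sub_add t hδ₀.ne', mul_pos (sub_pos.2 hδ) (sub_pos.2 ht)]

theorem lt_add_div_add_inv_self (ht : 1 < t) (hδ₀ : 0 < δ) (hδ : δ < 1) :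
    δ < (t + δ) / (t + δ⁻¹) := by
  rw [lt_div_iff₀ (by linarith [inv_pos.2 hδ₀])]
  linarith [mul_add_inv_sub_add t hδ₀.ne', mul_neg_of_neg_of_pos (sub_neg.2 hδ) (sub_pos.2 ht)]

end PerturbedRatio

/-- Lemma 3.1: with w₁ = λ−1+δ, w₂ = (1/x₁)(λ−1+1/δ),
if δ > 1 then w₁/w₂ < a₁₂ = x₁δ, and if δ < 1 then w₁/w₂ > a₁₂. -/
theorem ratio_w1_w2_vs_a12 {n : ℕ} (hn : 3 ≤ n)
    (x : Fin n → ℝ) (hx : ∀ i, 0 < x i)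
    (δ : ℝ) (hδ : 0 < δ)
    (lam : ℝ)
    (hgt : (n : ℝ) < lam) :
    (1 < δ →
      (lam - 1 + δ) / ((1 / x ⟨1, by omega⟩) * (lam - 1 + 1 / δ)) <
        x ⟨1, by omega⟩ * δ) ∧
    (δ < 1 →
      (lam - 1 + δ) / ((1 / x ⟨1, by omega⟩) * (lam - 1 + 1 / δ)) >
        x ⟨1, by omega⟩ * δ) := by
  set x₁ := x ⟨1, by omega⟩
  have hx₁ : 0 < x₁ := hx _
  have ht : 1 < lam - 1 := by
    have : (3 : ℝ) ≤ n := by exact_mod_cast hn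
    linarith
  have hratio : (lam - 1 + δ) / ((1 / x₁) * (lam - 1 + 1 / δ)) =
      x₁ * ((lam - 1 + δ) / (lam - 1 + δ⁻¹)) := by
    rw [one_div, one_div, div_mul_eq_div_div, div_inv_eq_mul, mul_comm, mul_div_assoc]
  rw [hratio]
  exact ⟨fun h => mul_lt_mul_of_pos_left (add_div_add_inv_lt_self ht h) hx₁,
    fun h => mul_lt_mul_of_pos_left (lt_add_div_add_inv_self ht hδ h) hx₁⟩
end

section
/- Let A_δ be the simple perturbed PCM with δ > 1 and w its Perron eigenvector. The digraph G with vertex set {1,…,n} and arcs i → j iff i ≠ j and w_i/w_j ≥ a_{ij} has the following arc structure: 2 → 1 but not 1 → 2; 1 → j but not j → 1 for all j ≥ 3; j → 2 but not 2 → j for all j ≥ 3; and both i → j and j → i for all distinct i, j ≥ 3. This digraph is strongly connected. -/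
/-!
Indices start at 0. Write `y i = x i * w i` and `S = ∑ j, y j`. Away from the pair `{0, 1}` the
matrix is consistent, so the arc `i → j` is exactly `y j ≤ y i`, and the eigen-equations read
`λ y i = S` for `i ≥ 2`, `λ y 0 = S + (δ - 1) y 1` and `λ y 1 = S + (δ⁻¹ - 1) y 0`.
Hence `y 1 < y i = y j < y 0` for `i, j ≥ 2`, and subtracting `δ` times the last equation from the
previous one gives `λ (y 0 - δ y 1) = -(δ - 1) ∑_{i ≥ 2} y i < 0`; as the arc `1 → 0` is
`y 0 ≤ δ y 1` and the arc `0 → 1` is `δ y 1 ≤ y 0`, this decides the arcs between `0` and `1`.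
Every vertex reaches `0` and is reached from it, so the digraph is strongly connected.
-/

open scoped Matrix

lemma Fintype.sum_mul_eq_add_of_eq_of_ne {ι R : Type*} [Fintype ι] [CommRing R] {f g w : ι → R}
    (k : ι) (h : ∀ j, j ≠ k → f j = g j) :
    ∑ j, f j * w j = ∑ j, g j * w j + (f k - g k) * w k := by
  rw [← sub_eq_iff_eq_add', ← Finset.sum_sub_distrib, Finset.sum_eq_single k]
  · ring
  · intro j _ hj
    rw [h j hj, sub_self]
  · simp

lemma Fintype.add_lt_sum_of_pos {ι M : Type*} [Fintype ι] [AddCommMonoid M] [PartialOrder M]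
    [IsOrderedCancelAddMonoid M] {f : ι → M} (hf : ∀ i, 0 < f i) {a b c : ι} (hab : a ≠ b)
    (hca : c ≠ a) (hcb : c ≠ b) : f a + f b < ∑ i, f i := by
  classical
  rw [← Finset.sum_pair hab]
  exact Finset.sum_lt_sum_of_subset (Finset.subset_univ _) (Finset.mem_univ c) (by simp [hca, hcb])
    (hf c) fun j _ _ ↦ (hf j).le

lemma Relation.transGen_of_reflTransGen_root {α : Type*} {r : α → α → Prop} (a : α)
    (h_to : ∀ u, Relation.ReflTransGen r u a) (h_from : ∀ v, Relation.ReflTransGen r a v)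
    {u v : α} (huv : u ≠ v) : Relation.TransGen r u v :=
  (Relation.reflTransGen_iff_eq_or_transGen.mp ((h_to u).trans (h_from v))).resolve_left huv.symm

section Entries

variable {n : ℕ} (x : Fin n → ℝ) (δ : ℝ) {i j : Fin n}

lemma simplePerturbed_apply_zero_one (hi : i.val = 0) (hj : j.val = 1) :
    simplePerturbed x δ i j = x j * δ := by
  simp [simplePerturbed, hi, hj]

lemma simplePerturbed_apply_one_zero (hi : i.val = 1) (hj : j.val = 0) :
    simplePerturbed x δ i j = 1 / (x i * δ) := by
  simp [simplePerturbed, hi, hj]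

lemma simplePerturbed_apply_of_not (h01 : ¬(i.val = 0 ∧ j.val = 1))
    (h10 : ¬(i.val = 1 ∧ j.val = 0)) : simplePerturbed x δ i j = x j / x i := by
  simp only [simplePerturbed, if_neg h01, if_neg h10]

end Entries

section Ratios

variable {n : ℕ} (x : Fin n → ℝ) (δ : ℝ) {w : Fin n → ℝ} {i j : Fin n}

lemma simplePerturbed_le_div_iff_of_not (h01 : ¬(i.val = 0 ∧ j.val = 1))
    (h10 : ¬(i.val = 1 ∧ j.val = 0)) (hxi : 0 < x i) (hwj : 0 < w j) :
    simplePerturbed x δ i j ≤ w i / w j ↔ x j * w j ≤ x i * w i := by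
  rw [simplePerturbed_apply_of_not x δ h01 h10, div_le_div_iff₀ hxi hwj, mul_comm (w i)]

lemma simplePerturbed_one_zero_le_div_iff (hi : i.val = 1) (hj : j.val = 0) (hxj : x j = 1)
    (hxi : 0 < x i) (hδ : 0 < δ) (hwj : 0 < w j) :
    simplePerturbed x δ i j ≤ w i / w j ↔ x j * w j ≤ δ * (x i * w i) := by
  rw [simplePerturbed_apply_one_zero x δ hi hj, div_le_div_iff₀ (by positivity) hwj, hxj]
  ring_nf

lemma simplePerturbed_zero_one_le_div_iff (hi : i.val = 0) (hj : j.val = 1) (hxi : x i = 1)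
    (hwj : 0 < w j) :
    simplePerturbed x δ i j ≤ w i / w j ↔ δ * (x j * w j) ≤ x i * w i := by
  rw [simplePerturbed_apply_zero_one x δ hi hj, le_div_iff₀ hwj, hxi]
  ring_nf

end Ratios

section Rows

variable {n : ℕ} {x : Fin n → ℝ} (δ : ℝ) (w : Fin n → ℝ)

lemma mul_simplePerturbed_mulVec_of_two_le {i : Fin n} (hi : 2 ≤ i.val) (hx : x i ≠ 0) :
    x i * (simplePerturbed x δ *ᵥ w) i = ∑ j, x j * w j := by
  rw [Matrix.mulVec, dotProduct, Finset.mul_sum]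
  refine Finset.sum_congr rfl fun j _ ↦ ?_
  rw [simplePerturbed_apply_of_not x δ (by omega) (by omega)]
  field_simp

lemma simplePerturbed_mulVec_zero {i0 i1 : Fin n} (hi0 : i0.val = 0) (hi1 : i1.val = 1)
    (hx0 : x i0 = 1) :
    (simplePerturbed x δ *ᵥ w) i0 = ∑ j, x j * w j + (δ - 1) * (x i1 * w i1) := by
  rw [Matrix.mulVec, dotProduct, Fintype.sum_mul_eq_add_of_eq_of_ne (g := x) i1,
    simplePerturbed_apply_zero_one x δ hi0 hi1]
  · ring
  · intro j hj
    have := Fin.val_ne_of_ne hj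
    rw [simplePerturbed_apply_of_not x δ (by omega) (by omega), hx0, div_one]

lemma mul_simplePerturbed_mulVec_one {i0 i1 : Fin n} (hi0 : i0.val = 0) (hi1 : i1.val = 1)
    (hx0 : x i0 = 1) (hx1 : x i1 ≠ 0) :
    x i1 * (simplePerturbed x δ *ᵥ w) i1 = ∑ j, x j * w j + (δ⁻¹ - 1) * (x i0 * w i0) := by
  rw [Matrix.mulVec, dotProduct, Finset.mul_sum]
  simp_rw [← mul_assoc]
  rw [Fintype.sum_mul_eq_add_of_eq_of_ne (g := x) i0, simplePerturbed_apply_one_zero x δ hi1 hi0,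
    hx0]
  · field_simp
  · intro j hj
    have := Fin.val_ne_of_ne hj
    rw [simplePerturbed_apply_of_not x δ (by omega) (by omega)]
    field_simp

end Rows

namespace IsPerronEigenpair

variable {n : ℕ} {x : Fin n → ℝ} {δ lam : ℝ} {w : Fin n → ℝ}
  (hP : IsPerronEigenpair (simplePerturbed x δ) lam w)
include hP

lemma mulVec_apply (i : Fin n) : (simplePerturbed x δ *ᵥ w) i = lam * w i := by
  rw [hP.2, Pi.smul_apply, smul_eq_mul]

lemma lam_mul_of_two_le {i : Fin n} (hi : 2 ≤ i.val) (hx : x i ≠ 0) :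
    lam * (x i * w i) = ∑ j, x j * w j := by
  rw [← mul_simplePerturbed_mulVec_of_two_le δ w hi hx, hP.mulVec_apply]
  ring

lemma lam_mul_zero {i0 i1 : Fin n} (hi0 : i0.val = 0) (hi1 : i1.val = 1) (hx0 : x i0 = 1) :
    lam * (x i0 * w i0) = ∑ j, x j * w j + (δ - 1) * (x i1 * w i1) := by
  rw [hx0, one_mul, ← hP.mulVec_apply, simplePerturbed_mulVec_zero δ w hi0 hi1 hx0]

lemma lam_mul_one {i0 i1 : Fin n} (hi0 : i0.val = 0) (hi1 : i1.val = 1) (hx0 : x i0 = 1)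
    (hx1 : x i1 ≠ 0) :
    lam * (x i1 * w i1) = ∑ j, x j * w j + (δ⁻¹ - 1) * (x i0 * w i0) := by
  rw [← mul_simplePerturbed_mulVec_one δ w hi0 hi1 hx0 hx1, hP.mulVec_apply]
  ring

variable (hx : ∀ i, 0 < x i)
include hx

lemma lam_pos {i : Fin n} (hi : 2 ≤ i.val) : 0 < lam := by
  have hsum : 0 < ∑ j, x j * w j :=
    Finset.sum_pos (fun j _ ↦ mul_pos (hx j) (hP.1 j)) ⟨i, Finset.mem_univ i⟩
  rw [← hP.lam_mul_of_two_le hi (hx i).ne'] at hsum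
  exact pos_of_mul_pos_left hsum (mul_pos (hx i) (hP.1 i)).le

lemma mul_eq_mul_of_two_le {i j : Fin n} (hi : 2 ≤ i.val) (hj : 2 ≤ j.val) :
    x i * w i = x j * w j :=
  mul_left_cancel₀ (hP.lam_pos hx hi).ne'
    ((hP.lam_mul_of_two_le hi (hx i).ne').trans (hP.lam_mul_of_two_le hj (hx j).ne').symm)

section Comparisons

variable {i0 i1 : Fin n} (hi0 : i0.val = 0) (hi1 : i1.val = 1) (hx0 : x i0 = 1) (hδ : 1 < δ)
include hi0 hi1 hx0 hδ

lemma mul_lt_mul_zero_of_two_le {j : Fin n} (hj : 2 ≤ j.val) :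
    x j * w j < x i0 * w i0 := by
  refine lt_of_mul_lt_mul_left ?_ (hP.lam_pos hx hj).le
  rw [hP.lam_mul_of_two_le hj (hx j).ne', hP.lam_mul_zero hi0 hi1 hx0, lt_add_iff_pos_right]
  exact mul_pos (sub_pos.mpr hδ) (mul_pos (hx i1) (hP.1 i1))

lemma mul_one_lt_mul_of_two_le {j : Fin n} (hj : 2 ≤ j.val) :
    x i1 * w i1 < x j * w j := by
  refine lt_of_mul_lt_mul_left ?_ (hP.lam_pos hx hj).le
  rw [hP.lam_mul_of_two_le hj (hx j).ne', hP.lam_mul_one hi0 hi1 hx0 (hx i1).ne',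
    add_lt_iff_neg_left]
  exact mul_neg_of_neg_of_pos (sub_neg.mpr (inv_lt_one_of_one_lt₀ hδ))
    (mul_pos (hx i0) (hP.1 i0))

lemma mul_zero_lt_mul_one {i2 : Fin n} (hi2 : 2 ≤ i2.val) :
    x i0 * w i0 < δ * (x i1 * w i1) := by
  have key : lam * (x i0 * w i0 - δ * (x i1 * w i1))
      = (δ - 1) * (x i0 * w i0 + x i1 * w i1 - ∑ j, x j * w j) := by
    linear_combination hP.lam_mul_zero hi0 hi1 hx0 - δ * hP.lam_mul_one hi0 hi1 hx0 (hx i1).ne'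
      - x i0 * w i0 * mul_inv_cancel₀ (by positivity : δ ≠ 0)
  have hsum : x i0 * w i0 + x i1 * w i1 < ∑ j, x j * w j :=
    Fintype.add_lt_sum_of_pos (f := fun j ↦ x j * w j) (c := i2) (fun j ↦ mul_pos (hx j) (hP.1 j))
      (Fin.ne_of_val_ne (by omega)) (Fin.ne_of_val_ne (by omega)) (Fin.ne_of_val_ne (by omega))
  have hneg : lam * (x i0 * w i0 - δ * (x i1 * w i1)) < 0 := by
    rw [key]
    exact mul_neg_of_pos_of_neg (sub_pos.mpr hδ) (by linarith)
  exact sub_neg.mp (neg_of_mul_neg_right hneg (hP.lam_pos hx hi2).le)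

end Comparisons

variable {i j : Fin n}

lemma le_div_of_two_le (hi : 2 ≤ i.val) (hj : 2 ≤ j.val) :
    simplePerturbed x δ i j ≤ w i / w j := by
  rw [simplePerturbed_le_div_iff_of_not x δ (by omega) (by omega) (hx i) (hP.1 j)]
  exact (hP.mul_eq_mul_of_two_le hx hi hj).ge

variable (hx0 : ∀ i : Fin n, i.val = 0 → x i = 1) (hδ : 1 < δ)
include hx0 hδ

lemma le_div_and_not_le_div_of_one_zero (hn : 3 ≤ n) (hi : i.val = 1) (hj : j.val = 0) :
    simplePerturbed x δ i j ≤ w i / w j ∧ ¬ simplePerturbed x δ j i ≤ w j / w i := by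
  have key := hP.mul_zero_lt_mul_one hx hj hi (hx0 j hj) hδ (i2 := ⟨2, by omega⟩) le_rfl
  rw [simplePerturbed_one_zero_le_div_iff x δ hi hj (hx0 j hj) (hx i) (by positivity) (hP.1 j),
    simplePerturbed_zero_one_le_div_iff x δ hj hi (hx0 j hj) (hP.1 i)]
  exact ⟨key.le, key.not_ge⟩

lemma le_div_and_not_le_div_of_zero_two_le (hi : i.val = 0) (hj : 2 ≤ j.val) :
    simplePerturbed x δ i j ≤ w i / w j ∧ ¬ simplePerturbed x δ j i ≤ w j / w i := by
  have key := hP.mul_lt_mul_zero_of_two_le hx hi (i1 := ⟨1, by omega⟩) rfl (hx0 i hi) hδ hj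
  rw [simplePerturbed_le_div_iff_of_not x δ (by omega) (by omega) (hx i) (hP.1 j),
    simplePerturbed_le_div_iff_of_not x δ (by omega) (by omega) (hx j) (hP.1 i)]
  exact ⟨key.le, key.not_ge⟩

lemma le_div_and_not_le_div_of_two_le_one (hi : 2 ≤ i.val) (hj : j.val = 1) :
    simplePerturbed x δ i j ≤ w i / w j ∧ ¬ simplePerturbed x δ j i ≤ w j / w i := by
  have key := hP.mul_one_lt_mul_of_two_le hx (i0 := ⟨0, by omega⟩) rfl hj (hx0 _ rfl) hδ hi
  rw [simplePerturbed_le_div_iff_of_not x δ (by omega) (by omega) (hx i) (hP.1 j),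
    simplePerturbed_le_div_iff_of_not x δ (by omega) (by omega) (hx j) (hP.1 i)]
  exact ⟨key.le, key.not_ge⟩

end IsPerronEigenpair

lemma Fin.transGen_of_arcs_through_zero {n : ℕ} (hn : 3 ≤ n) {r : Fin n → Fin n → Prop}
    (h10 : ∀ i j : Fin n, i.val = 1 → j.val = 0 → r i j)
    (h0 : ∀ i j : Fin n, i.val = 0 → 2 ≤ j.val → r i j)
    (h1 : ∀ i j : Fin n, 2 ≤ i.val → j.val = 1 → r i j) {u v : Fin n} (huv : u ≠ v) :
    Relation.TransGen r u v := by
  let i0 : Fin n := ⟨0, by omega⟩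
  let i1 : Fin n := ⟨1, by omega⟩
  let i2 : Fin n := ⟨2, by omega⟩
  refine Relation.transGen_of_reflTransGen_root i0 (fun u ↦ ?_) (fun v ↦ ?_) huv
  · obtain hu | hu | hu : u.val = 0 ∨ u.val = 1 ∨ 2 ≤ u.val := by omega
    · rw [show u = i0 from Fin.ext hu]
    · exact .single (h10 u i0 hu rfl)
    · exact .head (h1 u i1 hu rfl) (.single (h10 i1 i0 rfl rfl))
  · obtain hv | hv | hv : v.val = 0 ∨ v.val = 1 ∨ 2 ≤ v.val := by omega
    · rw [show v = i0 from Fin.ext hv]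
    · exact .head (h0 i0 i2 rfl le_rfl) (.single (h1 i2 v le_rfl hv))
    · exact .single (h0 i0 v rfl hv)

/-- arc structure of the digraph of a simple perturbed PCM (δ > 1)
with its Perron eigenvector, and its strong connectivity. -/
theorem digraph_structure_simple_perturbed {n : ℕ} (hn : 3 ≤ n)
    (x : Fin n → ℝ) (hx : ∀ i, 0 < x i) (hx0 : ∀ i : Fin n, i.val = 0 → x i = 1)
    (δ : ℝ) (hδ : 1 < δ)
    (lam : ℝ) (w : Fin n → ℝ)
    (hPerron : IsPerronEigenpair (simplePerturbed x δ) lam w)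
    (E : Fin n → Fin n → Prop)
    (hE : ∀ i j : Fin n, E i j ↔ (i ≠ j ∧ simplePerturbed x δ i j ≤ w i / w j)) :
    (∀ i j : Fin n, i.val = 1 → j.val = 0 → E i j ∧ ¬ E j i) ∧
    (∀ i j : Fin n, i.val = 0 → 2 ≤ j.val → E i j ∧ ¬ E j i) ∧
    (∀ i j : Fin n, 2 ≤ i.val → j.val = 1 → E i j ∧ ¬ E j i) ∧
    (∀ i j : Fin n, 2 ≤ i.val → 2 ≤ j.val → i ≠ j → E i j ∧ E j i) ∧
    (∀ u v : Fin n, u ≠ v → Relation.TransGen E u v) := by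
  have hE_of_ne {i j : Fin n} (h : i.val ≠ j.val) :
      E i j ↔ simplePerturbed x δ i j ≤ w i / w j := by
    rw [hE, and_iff_right (Fin.ne_of_val_ne h)]
  have one_way {i j : Fin n} (h : i.val ≠ j.val)
      (hij : simplePerturbed x δ i j ≤ w i / w j ∧ ¬ simplePerturbed x δ j i ≤ w j / w i) :
      E i j ∧ ¬ E j i := by
    rwa [hE_of_ne h, hE_of_ne h.symm]
  have arcs_one_zero (i j : Fin n) (hi : i.val = 1) (hj : j.val = 0) : E i j ∧ ¬ E j i :=
    one_way (by omega) (hPerron.le_div_and_not_le_div_of_one_zero hx hx0 hδ hn hi hj)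
  have arcs_zero_two (i j : Fin n) (hi : i.val = 0) (hj : 2 ≤ j.val) : E i j ∧ ¬ E j i :=
    one_way (by omega) (hPerron.le_div_and_not_le_div_of_zero_two_le hx hx0 hδ hi hj)
  have arcs_two_one (i j : Fin n) (hi : 2 ≤ i.val) (hj : j.val = 1) : E i j ∧ ¬ E j i :=
    one_way (by omega) (hPerron.le_div_and_not_le_div_of_two_le_one hx hx0 hδ hi hj)
  refine ⟨arcs_one_zero, arcs_zero_two, arcs_two_one, fun i j hi hj hij ↦
    ⟨(hE i j).2 ⟨hij, hPerron.le_div_of_two_le hx hi hj⟩,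
      (hE j i).2 ⟨hij.symm, hPerron.le_div_of_two_le hx hj hi⟩⟩,
    fun u v huv ↦ Fin.transGen_of_arcs_through_zero hn
      (fun i j hi hj ↦ (arcs_one_zero i j hi hj).1) (fun i j hi hj ↦ (arcs_zero_two i j hi hj).1)
      (fun i j hi hj ↦ (arcs_two_one i j hi hj).1) huv⟩
end

section
/- The Perron (principal right) eigenvector of every 3×3 pairwise comparison matrix is efficient. -/
open Finset

def IsConsistentOn {n : ℕ} (A : Matrix (Fin n) (Fin n) ℝ) (S : Finset (Fin n)) : Prop :=
  ∀ i ∈ S, ∀ j ∈ S, ∀ k ∈ S, A i k * A k j = A i j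

theorem lt_of_abs_sub_le_abs_sub_of_lt {a p p' : ℝ} (hp : p' < p) (h : |a - p'| ≤ |a - p|) :
    a < p := by
  by_contra! hap
  rw [abs_of_nonneg (sub_nonneg.mpr hap), abs_of_pos (by linarith)] at h
  linarith

theorem mul_lt_of_div_lt_div_of_abs_sub_le {a u v u' v' : ℝ} (hu : 0 < u) (hv : 0 < v)
    (hv' : 0 < v') (hr : u' / u < v' / v) (h : |a - u' / v'| ≤ |a - u / v|) : a * v < u := by
  have hr' : u' / v' < u / v := by
    rw [div_lt_div_iff₀ hu hv] at hr
    rw [div_lt_div_iff₀ hv' hv]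
    linarith
  exact (lt_div_iff₀ hv).mp (lt_of_abs_sub_le_abs_sub_of_lt hr' h)

namespace IsPCM

variable {n : ℕ} {A : Matrix (Fin n) (Fin n) ℝ}

theorem diag_eq_one (hA : IsPCM A) (i : Fin n) : A i i = 1 := by
  have h := hA.2 i i
  rw [eq_div_iff (hA.1 i i).ne'] at h
  nlinarith [hA.1 i i]

theorem mul_swap_eq_one (hA : IsPCM A) (i j : Fin n) : A i j * A j i = 1 := by
  rw [hA.2 i j]
  field_simp [(hA.1 i j).ne']

theorem isConsistentOn_of_card_le_two (hA : IsPCM A) {S : Finset (Fin n)} (hS : #S ≤ 2) :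
    IsConsistentOn A S := by
  intro i hi j hj k hk
  by_cases hik : i = k
  · rw [hik, hA.diag_eq_one, one_mul]
  by_cases hkj : k = j
  · rw [hkj, hA.diag_eq_one, mul_one]
  by_cases hij : i = j
  · rw [← hij, hA.mul_swap_eq_one, hA.diag_eq_one]
  have hcard : #{i, j, k} = 3 := card_eq_three.mpr ⟨i, j, k, hij, hik, Ne.symm hkj, rfl⟩
  have hsub : {i, j, k} ⊆ S := by simp [insert_subset_iff, hi, hj, hk]
  have := card_le_card hsub
  omega

end IsPCM

namespace IsPerronEigenpair

variable {n : ℕ} {A : Matrix (Fin n) (Fin n) ℝ} {lam : ℝ} {w : Fin n → ℝ}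

theorem sum_mul_eq (hw : IsPerronEigenpair A lam w) (i : Fin n) :
    ∑ j, A i j * w j = lam * w i := by
  simpa [Matrix.mulVec, dotProduct] using congrFun hw.2 i

theorem natCast_le [NeZero n] (hA : IsPCM A) (hw : IsPerronEigenpair A lam w) :
    (n : ℝ) ≤ lam := by
  set t : Fin n → Fin n → ℝ := fun i j => A i j * w j / w i
  have ht_pos : ∀ i j, 0 < t i j := fun i j => div_pos (mul_pos (hA.1 i j) (hw.1 j)) (hw.1 i)
  have ht_mul : ∀ i j, t i j * t j i = 1 := fun i j => by
    have := hw.1 i; have := hw.1 j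
    simp only [t]
    field_simp
    linear_combination hA.mul_swap_eq_one i j
  have hrow : ∀ i, ∑ j, t i j = lam := fun i => by
    simp only [t, ← sum_div, hw.sum_mul_eq]
    field_simp [(hw.1 i).ne']
  have hpair : ∀ i j, 2 ≤ t i j + t j i := fun i j => by
    nlinarith [sq_nonneg (t i j - t j i), ht_pos i j, ht_pos j i, ht_mul i j]
  have hsum : 2 * (n * n : ℝ) ≤ 2 * (n * lam) :=
    calc 2 * (n * n : ℝ) = ∑ i : Fin n, ∑ j : Fin n, (2 : ℝ) := by simp; ring
      _ ≤ ∑ i, ∑ j, (t i j + t j i) := sum_le_sum fun i _ => sum_le_sum fun j _ => hpair i j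
      _ = 2 * (n * lam) := by
        simp only [sum_add_distrib]
        rw [sum_comm (f := fun i j => t j i)]
        simp [hrow]
        ring
  have hn : (0 : ℝ) < n := by exact_mod_cast Nat.pos_of_neZero n
  nlinarith

/-- Multiplying row `i ∈ S` by `a_{i₀ i}` turns its `S`-part into the same sum `c` for every
`i`, by consistency on `S`; summed over `S`, the weights `a_{i₀ i} wᵢ` also add up to `c`. -/
theorem lt_natCast_of_isConsistentOn (hA : ∀ i j, 0 < A i j) (hw : IsPerronEigenpair A lam w)
    {S : Finset (Fin n)} (hS : S.Nonempty) (hSu : S ≠ univ) (hcons : IsConsistentOn A S)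
    (hlow : ∀ i ∈ S, ∀ j ∉ S, A i j * w j < w i) : lam < n := by
  obtain ⟨i₀, hi₀⟩ := hS
  have hSc : Sᶜ.Nonempty := nonempty_iff_ne_empty.mpr (by rwa [Ne, compl_eq_empty_iff])
  set c := ∑ j ∈ S, A i₀ j * w j
  have hc : 0 < c := sum_pos (fun j _ => mul_pos (hA i₀ j) (hw.1 j)) ⟨i₀, hi₀⟩
  have hrow : ∀ i ∈ S, lam * (A i₀ i * w i) < c + #Sᶜ * (A i₀ i * w i) := fun i hi =>
    calc lam * (A i₀ i * w i) = A i₀ i * ∑ j, A i j * w j := by rw [hw.sum_mul_eq]; ring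
      _ = ∑ j ∈ S, A i₀ i * (A i j * w j) + ∑ j ∈ Sᶜ, A i₀ i * (A i j * w j) := by
        rw [mul_sum, sum_add_sum_compl]
      _ < c + ∑ j ∈ Sᶜ, A i₀ i * w i := by
        refine add_lt_add_of_le_of_lt (sum_congr rfl fun j hj => ?_).le
          (sum_lt_sum_of_nonempty hSc fun j hj => ?_)
        · rw [← mul_assoc, hcons i₀ hi₀ j hj i hi]
        · exact mul_lt_mul_of_pos_left (hlow i hi j (mem_compl.mp hj)) (hA i₀ i)
      _ = c + #Sᶜ * (A i₀ i * w i) := by rw [sum_const, nsmul_eq_mul]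
  have hsum := sum_lt_sum_of_nonempty ⟨i₀, hi₀⟩ hrow
  rw [← mul_sum, sum_add_distrib, ← mul_sum, sum_const, nsmul_eq_mul] at hsum
  have hcard : (#S : ℝ) + #Sᶜ = n := by exact_mod_cast (card_add_card_compl S).trans (by simp)
  have : lam * c < n * c := by rw [← hcard]; linarith
  exact lt_of_mul_lt_mul_right this hc.le

theorem isEfficient_of_isConsistentOn (hA : IsPCM A) (hw : IsPerronEigenpair A lam w)
    (hcons : ∀ S : Finset (Fin n), S ≠ univ → IsConsistentOn A S) : IsEfficient A w := by
  rintro ⟨w', hw', hdom, k, l, hkl⟩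
  have : NeZero n := ⟨fun h => by subst h; exact k.elim0⟩
  set r : Fin n → ℝ := fun i => w' i / w i
  set S := univ.filter fun i => ∀ j, r i ≤ r j
  have hS : S.Nonempty := by
    obtain ⟨i, -, hi⟩ := exists_min_image univ r univ_nonempty
    exact ⟨i, by simpa [S] using hi⟩
  have hSu : S ≠ univ := by
    intro hSu
    have hmin : ∀ i j, r i ≤ r j := fun i => (mem_filter.mp (hSu.symm ▸ mem_univ i : i ∈ S)).2
    have hr : w' k * w l = w' l * w k :=
      (div_eq_div_iff (hw.1 k).ne' (hw.1 l).ne').mp (le_antisymm (hmin k l) (hmin l k))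
    have hratio : w' k / w' l = w k / w l := by
      rw [div_eq_div_iff (hw' l).ne' (hw.1 l).ne']
      linarith
    exact (hratio ▸ hkl).false
  have hlow : ∀ i ∈ S, ∀ j ∉ S, A i j * w j < w i := fun i hi j hj => by
    simp only [S, mem_filter, mem_univ, true_and, not_forall, not_le] at hi hj
    obtain ⟨m, hm⟩ := hj
    exact mul_lt_of_div_lt_div_of_abs_sub_le (hw.1 i) (hw.1 j) (hw' j)
      ((hi m).trans_lt hm) (hdom i j)
  exact (hw.natCast_le hA).not_gt
    (hw.lt_natCast_of_isConsistentOn hA.1 hS hSu (hcons S hSu) hlow)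

end IsPerronEigenpair

/-- the Perron eigenvector of every 3×3 PCM is efficient. -/
theorem perron_eigenvector_three_by_three_is_efficient
    (A : Matrix (Fin 3) (Fin 3) ℝ) (hA : IsPCM A)
    (lam : ℝ) (w : Fin 3 → ℝ) (hPerron : IsPerronEigenpair A lam w) :
    IsEfficient A w :=
  hPerron.isEfficient_of_isConsistentOn hA fun S hS =>
    hA.isConsistentOn_of_card_le_two <| by
      simpa [Nat.lt_succ_iff] using (card_lt_iff_ne_univ S).mpr hS
end
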